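/- The function G_α(s,t) = c_{α,d,κ} (κ‖s−t‖)^{(α−d)/2} K_{(α−d)/2}(κ‖s−t‖), with c_{α,d,κ} = 2^{1−(α−d)/2} / ((4π)^{d/2} Γ(α/2) κ^{α−d}), viewed as a function of t for fixed s, belongs to L_p(ℝ^d) if and only if α > (p−1)d/p, for 1 ≤ p < ∞ and α, κ > 0. -/

import Mathlib

open MeasureTheory Real Set

noncomputable def besselK (ν x : ℝ) : ℝ :=
  ∫ t in Ioi (0 : ℝ), Real.exp (-x * Real.cosh t) * Real.cosh (ν * t)

/-- The Green's function `G_α` of `(κ² − Δ)^{α/2}` on `ℝ^d`. -/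
noncomputable def greenG (d : ℕ) (α κ : ℝ) (s t : EuclideanSpace ℝ (Fin d)) : ℝ :=
  2 ^ (1 - (α - d) / 2) / ((4 * π) ^ ((d : ℝ) / 2) * Real.Gamma (α / 2) * κ ^ (α - d)) *
    (κ * ‖s - t‖) ^ ((α - d) / 2) * besselK ((α - d) / 2) (κ * ‖s - t‖)

open scoped ENNReal

/-!
With `ν = (α - d) / 2`, `G_α(s, t)` is a positive multiple of `(κr)^ν K_ν(κr)`, `r = ‖s - t‖`,
so by translation invariance and polar coordinates `G_α(s, ·) ∈ L_p` iff
`∫₀^∞ r^(d-1) ((κr)^ν K_ν(κr))^p dr < ∞`.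

Bounding `cosh` by exponentials and substituting `u = c eᵗ` compares `K_ν` with Euler's integral:
`K_ν(x) ≤ Γ(μ) 4^μ x^(-μ) e^(-x/2)` whenever `|ν| ≤ μ`, and `K_ν(x) ≥ c x^(-|ν|)` for `x ≤ 1`.
If `d + 2νp > 0`, the upper bound with `μ = max ν (d/2p)` dominates the radial integrand by a
multiple of `r^(d-1-(μ-ν)p) e^(-pκr/2)` with `(μ - ν)p < d`, which is integrable. If
`d + 2νp ≤ 0`, then `ν < 0` and the lower bound makes the integrand at least a multiple of
`r^(d-1+2νp)` near `0`, which is not. Finally `d + 2νp > 0` is `α > (p - 1)d/p`.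
-/

noncomputable def besselKIntegrand (ν x t : ℝ) : ℝ := exp (-x * cosh t) * cosh (ν * t)

lemma besselK_eq_toReal_lintegral (ν x : ℝ) :
    besselK ν x = (∫⁻ t in Ioi 0, ENNReal.ofReal (besselKIntegrand ν x t)).toReal := by
  rw [besselK, integral_eq_lintegral_of_nonneg_ae (.of_forall fun t => by positivity)]
  · rfl
  · fun_prop

lemma besselK_nonneg (ν x : ℝ) : 0 ≤ besselK ν x := by
  rw [besselK_eq_toReal_lintegral]; exact ENNReal.toReal_nonneg

lemma measurable_besselK (ν : ℝ) : Measurable (besselK ν) :=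
  (StronglyMeasurable.integral_prod_right' (f := fun q : ℝ × ℝ => besselKIntegrand ν q.1 q.2)
    (by unfold besselKIntegrand; fun_prop)).measurable

lemma lintegral_Ioi_comp_mul_exp {c : ℝ} (hc : 0 < c) (g : ℝ → ℝ≥0∞) :
    ∫⁻ t in Ioi 0, ENNReal.ofReal (c * exp t) * g (c * exp t) = ∫⁻ u in Ioi c, g u := by
  have himage : (fun t => c * exp t) '' Ioi 0 = Ioi c := by
    ext u
    constructor
    · rintro ⟨t, ht, rfl⟩
      exact lt_mul_of_one_lt_right hc (one_lt_exp_iff.2 ht)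
    · intro hu
      refine ⟨log (u / c), log_pos ((one_lt_div hc).2 hu), ?_⟩
      simp only [exp_log (div_pos (hc.trans hu) hc), mul_div_cancel₀ _ hc.ne']
  rw [← himage, lintegral_image_eq_lintegral_abs_deriv_mul measurableSet_Ioi
    (fun t _ => ((hasDerivAt_exp t).const_mul c).hasDerivWithinAt)
    (fun a _ b _ h => exp_injective (mul_left_cancel₀ hc.ne' h))]
  refine setLIntegral_congr_fun measurableSet_Ioi fun t _ => ?_
  rw [abs_of_pos (by positivity)]

lemma lintegral_exp_neg_mul_exp_mul_exp {c : ℝ} (hc : 0 < c) (μ : ℝ) :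
    ∫⁻ t in Ioi 0, ENNReal.ofReal (exp (-(c * exp t)) * exp (μ * t)) =
      ENNReal.ofReal (c ^ (-μ)) * ∫⁻ u in Ioi c, ENNReal.ofReal (exp (-u) * u ^ (μ - 1)) := by
  rw [← lintegral_Ioi_comp_mul_exp hc, ← lintegral_const_mul' _ _ ENNReal.ofReal_ne_top]
  refine setLIntegral_congr_fun measurableSet_Ioi fun t _ => ?_
  have hct : 0 < c * exp t := by positivity
  rw [← ENNReal.ofReal_mul hct.le, ← ENNReal.ofReal_mul (by positivity)]
  congr 1
  rw [rpow_sub_one hct.ne', mul_rpow hc.le (exp_pos t).le, ← exp_mul, rpow_neg hc.le]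
  field_simp

lemma ofReal_Gamma_eq_lintegral {μ : ℝ} (hμ : 0 < μ) :
    ENNReal.ofReal (Gamma μ) = ∫⁻ u in Ioi 0, ENNReal.ofReal (exp (-u) * u ^ (μ - 1)) := by
  rw [Gamma_eq_integral hμ, ofReal_integral_eq_lintegral_ofReal (GammaIntegral_convergent hμ)
    (ae_restrict_of_forall_mem measurableSet_Ioi fun u hu =>
      mul_nonneg (exp_pos _).le (rpow_nonneg (le_of_lt hu) _))]

lemma cosh_le_exp_of_nonneg {t : ℝ} (ht : 0 ≤ t) : cosh t ≤ exp t := by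
  rw [cosh_eq]
  linarith [exp_le_exp.2 (neg_le_self ht)]

lemma exp_div_two_le_cosh (t : ℝ) : exp t / 2 ≤ cosh t := by
  rw [cosh_eq]
  linarith [exp_pos (-t)]

lemma besselKIntegrand_le {ν μ x t : ℝ} (hx : 0 ≤ x) (ht : 0 ≤ t) (hνμ : |ν| ≤ μ) :
    besselKIntegrand ν x t ≤ exp (-x / 2) * (exp (-(x / 4 * exp t)) * exp (μ * t)) := by
  have hcosh : cosh (ν * t) ≤ exp (μ * t) :=
    calc cosh (ν * t) ≤ cosh (μ * t) := by
          rw [cosh_le_cosh, abs_mul, abs_mul, abs_of_nonneg ht,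
            abs_of_nonneg ((abs_nonneg ν).trans hνμ)]
          exact mul_le_mul_of_nonneg_right hνμ ht
      _ ≤ exp (μ * t) := cosh_le_exp_of_nonneg (mul_nonneg ((abs_nonneg ν).trans hνμ) ht)
  have hexp : exp (-x * cosh t) ≤ exp (-x / 2) * exp (-(x / 4 * exp t)) := by
    rw [← exp_add]
    gcongr
    nlinarith [one_le_cosh t, exp_div_two_le_cosh t]
  calc besselKIntegrand ν x t ≤ exp (-x / 2) * exp (-(x / 4 * exp t)) * exp (μ * t) :=
        mul_le_mul hexp hcosh (cosh_pos _).le (by positivity)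
    _ = _ := mul_assoc _ _ _

lemma lintegral_besselKIntegrand_le {ν μ x : ℝ} (hx : 0 < x) (hμ : 0 < μ) (hνμ : |ν| ≤ μ) :
    ∫⁻ t in Ioi 0, ENNReal.ofReal (besselKIntegrand ν x t) ≤
      ENNReal.ofReal (Gamma μ * 4 ^ μ * x ^ (-μ) * exp (-x / 2)) :=
  calc ∫⁻ t in Ioi 0, ENNReal.ofReal (besselKIntegrand ν x t)
      ≤ ∫⁻ t in Ioi 0, ENNReal.ofReal (exp (-x / 2)) *
          ENNReal.ofReal (exp (-(x / 4 * exp t)) * exp (μ * t)) := by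
        refine setLIntegral_mono' measurableSet_Ioi fun t ht => ?_
        rw [← ENNReal.ofReal_mul (exp_pos _).le]
        exact ENNReal.ofReal_le_ofReal (besselKIntegrand_le hx.le (le_of_lt ht) hνμ)
    _ = ENNReal.ofReal (exp (-x / 2)) * (ENNReal.ofReal ((x / 4) ^ (-μ)) *
          ∫⁻ u in Ioi (x / 4), ENNReal.ofReal (exp (-u) * u ^ (μ - 1))) := by
        rw [lintegral_const_mul' _ _ ENNReal.ofReal_ne_top,
          lintegral_exp_neg_mul_exp_mul_exp (by positivity)]
    _ ≤ ENNReal.ofReal (exp (-x / 2)) * (ENNReal.ofReal ((x / 4) ^ (-μ)) *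
          ∫⁻ u in Ioi 0, ENNReal.ofReal (exp (-u) * u ^ (μ - 1))) := by
        gcongr _ * (_ * ?_)
        exact lintegral_mono_set (Ioi_subset_Ioi (by positivity : (0:ℝ) ≤ x / 4))
    _ = ENNReal.ofReal (Gamma μ * 4 ^ μ * x ^ (-μ) * exp (-x / 2)) := by
        rw [← ofReal_Gamma_eq_lintegral hμ, ← ENNReal.ofReal_mul (by positivity),
          ← ENNReal.ofReal_mul (by positivity)]
        congr 1
        rw [div_rpow hx.le (by norm_num), rpow_neg (by norm_num : (0:ℝ) ≤ 4)]
        field_simp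

lemma besselK_le {ν μ x : ℝ} (hx : 0 < x) (hμ : 0 < μ) (hνμ : |ν| ≤ μ) :
    besselK ν x ≤ Gamma μ * 4 ^ μ * x ^ (-μ) * exp (-x / 2) := by
  rw [besselK_eq_toReal_lintegral]
  exact ENNReal.toReal_le_of_le_ofReal (by have := Gamma_pos_of_pos hμ; positivity)
    (lintegral_besselKIntegrand_le hx hμ hνμ)

lemma besselKIntegrand_ge (ν : ℝ) {x t : ℝ} (hx : 0 ≤ x) (ht : 0 ≤ t) :
    exp (-(x * exp t)) * exp (|ν| * t) / 2 ≤ besselKIntegrand ν x t := by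
  have hcosh : exp (|ν| * t) / 2 ≤ cosh (ν * t) := by
    rw [← cosh_abs, abs_mul, abs_of_nonneg ht]
    exact exp_div_two_le_cosh _
  have hexp : exp (-(x * exp t)) ≤ exp (-x * cosh t) := by
    gcongr
    nlinarith [cosh_le_exp_of_nonneg ht]
  calc exp (-(x * exp t)) * exp (|ν| * t) / 2 = exp (-(x * exp t)) * (exp (|ν| * t) / 2) := by
        ring
    _ ≤ besselKIntegrand ν x t := mul_le_mul hexp hcosh (by positivity) (exp_pos _).le

lemma exists_pos_mul_rpow_neg_le_besselK {ν : ℝ} (hν : ν ≠ 0) :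
    ∃ c > 0, ∀ x ∈ Ioc (0 : ℝ) 1, c * x ^ (-|ν|) ≤ besselK ν x := by
  have hm : 0 < |ν| := abs_pos.2 hν
  set I := ∫⁻ u in Ioi 1, ENNReal.ofReal (exp (-u) * u ^ (|ν| - 1))
  have hI0 : I ≠ 0 := by
    refine (setLIntegral_pos_iff (by fun_prop)).2 ?_ |>.ne'
    have : Ioi (1 : ℝ) ⊆ Function.support fun u => ENNReal.ofReal (exp (-u) * u ^ (|ν| - 1)) :=
      fun u (hu : 1 < u) => by
        have : 0 < u := zero_lt_one.trans hu
        exact (ENNReal.ofReal_pos.2 (by positivity)).ne'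
    rw [inter_eq_right.2 this, volume_Ioi]
    exact ENNReal.zero_lt_top
  have hItop : I ≠ ⊤ :=
    ne_top_of_le_ne_top ENNReal.ofReal_ne_top
      ((lintegral_mono_set (Ioi_subset_Ioi zero_le_one)).trans (ofReal_Gamma_eq_lintegral hm).ge)
  refine ⟨I.toReal / 2, by positivity [ENNReal.toReal_pos hI0 hItop], fun x ⟨hx0, hx1⟩ => ?_⟩
  rw [besselK_eq_toReal_lintegral, ← ENNReal.ofReal_le_iff_le_toReal
    (ne_top_of_le_ne_top ENNReal.ofReal_ne_top (lintegral_besselKIntegrand_le hx0 hm le_rfl))]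
  calc ENNReal.ofReal (I.toReal / 2 * x ^ (-|ν|))
      = ENNReal.ofReal (1 / 2) * (ENNReal.ofReal (x ^ (-|ν|)) * I) := by
        rw [← ENNReal.ofReal_toReal hItop, ← ENNReal.ofReal_mul (by positivity),
          ← ENNReal.ofReal_mul (by positivity), ENNReal.ofReal_toReal hItop]
        ring_nf
    _ ≤ ENNReal.ofReal (1 / 2) * (ENNReal.ofReal (x ^ (-|ν|)) *
          ∫⁻ u in Ioi x, ENNReal.ofReal (exp (-u) * u ^ (|ν| - 1))) := by
        gcongr _ * (_ * ?_)
        exact lintegral_mono_set (Ioi_subset_Ioi hx1)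
    _ = ∫⁻ t in Ioi 0, ENNReal.ofReal (exp (-(x * exp t)) * exp (|ν| * t) / 2) := by
        rw [← lintegral_exp_neg_mul_exp_mul_exp hx0,
          ← lintegral_const_mul' _ _ ENNReal.ofReal_ne_top]
        refine setLIntegral_congr_fun measurableSet_Ioi fun t _ => ?_
        rw [← ENNReal.ofReal_mul (by norm_num)]
        ring_nf
    _ ≤ ∫⁻ t in Ioi 0, ENNReal.ofReal (besselKIntegrand ν x t) :=
        setLIntegral_mono' measurableSet_Ioi fun t ht =>
          ENNReal.ofReal_le_ofReal (besselKIntegrand_ge ν hx0.le (le_of_lt ht))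

lemma memLp_const_mul_iff {α 𝕜 : Type*} [MeasurableSpace α] {μ : Measure α} [NormedField 𝕜]
    {f : α → 𝕜} {p : ℝ≥0∞} {c : 𝕜} (hc : c ≠ 0) :
    MemLp (fun x => c * f x) p μ ↔ MemLp f p μ :=
  ⟨fun h => by simpa [hc] using h.const_mul c⁻¹, fun h => h.const_mul c⟩

theorem memLp_comp_norm_sub_iff {E F : Type*} [NormedAddCommGroup E] [NormedSpace ℝ E]
    [FiniteDimensional ℝ E] [MeasurableSpace E] [BorelSpace E] [Nontrivial E]
    (μ : Measure E) [μ.IsAddHaarMeasure] [NormedAddCommGroup F]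
    {g : ℝ → F} (hg : StronglyMeasurable g) {p : ℝ≥0∞} (hp0 : p ≠ 0) (hp : p ≠ ∞) (s : E) :
    MemLp (fun x => g ‖s - x‖) p μ ↔
      IntegrableOn (fun y => y ^ ((Module.finrank ℝ E : ℝ) - 1) * ‖g y‖ ^ p.toReal) (Ioi 0) := by
  have hmeas : AEStronglyMeasurable (fun x => g ‖s - x‖) μ :=
    (hg.comp_measurable (by fun_prop)).aestronglyMeasurable
  rw [← integrable_norm_rpow_iff hmeas hp0 hp,
    integrable_comp_sub_left (fun x => ‖g ‖x‖‖ ^ p.toReal) s,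
    integrable_fun_norm_addHaar μ (f := fun y => ‖g y‖ ^ p.toReal)]
  refine integrableOn_congr_fun (fun y _ => ?_) measurableSet_Ioi
  rw [smul_eq_mul, ← rpow_natCast, Nat.cast_sub Module.finrank_pos, Nat.cast_one]

noncomputable def besselRadial (ν κ y : ℝ) : ℝ := (κ * y) ^ ν * besselK ν (κ * y)

lemma measurable_besselRadial (ν κ : ℝ) : Measurable (besselRadial ν κ) :=
  ((measurable_const_mul κ).pow_const ν).mul ((measurable_besselK ν).comp (measurable_const_mul κ))

lemma besselRadial_nonneg (ν : ℝ) {κ y : ℝ} (hκ : 0 ≤ κ) (hy : 0 ≤ y) :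
    0 ≤ besselRadial ν κ y :=
  mul_nonneg (rpow_nonneg (mul_nonneg hκ hy) ν) (besselK_nonneg _ _)

lemma besselRadial_le {ν μ κ y : ℝ} (hκ : 0 < κ) (hy : 0 < y) (hμ : 0 < μ) (hνμ : |ν| ≤ μ) :
    besselRadial ν κ y ≤ Gamma μ * 4 ^ μ * κ ^ (ν - μ) * y ^ (ν - μ) * exp (-(κ / 2) * y) := by
  have hκy : 0 < κ * y := mul_pos hκ hy
  calc besselRadial ν κ y
      ≤ (κ * y) ^ ν * (Gamma μ * 4 ^ μ * (κ * y) ^ (-μ) * exp (-(κ * y) / 2)) :=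
        mul_le_mul_of_nonneg_left (besselK_le hκy hμ hνμ) (rpow_nonneg hκy.le ν)
    _ = Gamma μ * 4 ^ μ * κ ^ (ν - μ) * y ^ (ν - μ) * exp (-(κ / 2) * y) := by
        have h : (κ * y) ^ ν * (κ * y) ^ (-μ) = κ ^ (ν - μ) * y ^ (ν - μ) := by
          rw [← rpow_add hκy, mul_rpow hκ.le hy.le, sub_eq_add_neg]
        rw [show -(κ / 2) * y = -(κ * y) / 2 by ring]
        linear_combination Gamma μ * 4 ^ μ * exp (-(κ * y) / 2) * h

lemma exists_pos_mul_rpow_le_besselRadial {ν κ : ℝ} (hν : ν < 0) (hκ : 0 < κ) :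
    ∃ c > 0, ∀ y ∈ Ioc 0 κ⁻¹, c * κ ^ (2 * ν) * y ^ (2 * ν) ≤ besselRadial ν κ y := by
  obtain ⟨c, hc, hK⟩ := exists_pos_mul_rpow_neg_le_besselK hν.ne
  refine ⟨c, hc, fun y ⟨hy0, hy1⟩ => ?_⟩
  have hκy : 0 < κ * y := mul_pos hκ hy0
  have hκy1 : κ * y ≤ 1 :=
    (mul_le_mul_of_nonneg_left hy1 hκ.le).trans (mul_inv_cancel₀ hκ.ne').le
  calc c * κ ^ (2 * ν) * y ^ (2 * ν) = (κ * y) ^ ν * (c * (κ * y) ^ (-|ν|)) := by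
        have h : (κ * y) ^ ν * (κ * y) ^ ν = κ ^ (2 * ν) * y ^ (2 * ν) := by
          rw [← rpow_add hκy, mul_rpow hκ.le hy0.le, two_mul]
        rw [abs_of_neg hν, neg_neg]
        linear_combination -c * h
    _ ≤ besselRadial ν κ y := mul_le_mul_of_nonneg_left (hK _ ⟨hκy, hκy1⟩) (rpow_nonneg hκy.le ν)

lemma measurable_rpow_mul_norm_besselRadial_rpow (ν κ p n : ℝ) :
    Measurable fun y => y ^ (n - 1) * ‖besselRadial ν κ y‖ ^ p :=
  (measurable_id.pow_const _).mul ((measurable_besselRadial ν κ).norm.pow_const _)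

lemma pos_of_integrableOn_rpow_mul_norm_besselRadial_rpow {ν κ p n : ℝ} (hκ : 0 < κ)
    (hp : 0 < p) (hn : 0 < n)
    (h : IntegrableOn (fun y => y ^ (n - 1) * ‖besselRadial ν κ y‖ ^ p) (Ioi 0)) :
    0 < n + 2 * ν * p := by
  by_contra! hle
  have hν : ν < 0 := by nlinarith
  obtain ⟨c, hc, hlow⟩ := exists_pos_mul_rpow_le_besselRadial hν hκ
  set C := (c * κ ^ (2 * ν)) ^ p
  have hC : 0 < C := by positivity
  have hint : IntegrableOn (fun y => y ^ (n - 1 + 2 * ν * p)) (Ioo 0 κ⁻¹) := by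
    refine ((h.mono_set Ioo_subset_Ioi_self).const_mul C⁻¹).mono'
      (measurable_id.pow_const _).aestronglyMeasurable ?_
    filter_upwards [ae_restrict_mem measurableSet_Ioo] with y ⟨hy0, hy1⟩
    rw [norm_of_nonneg (rpow_nonneg hy0.le _), le_inv_mul_iff₀ hC]
    calc C * y ^ (n - 1 + 2 * ν * p) = y ^ (n - 1) * (c * κ ^ (2 * ν) * y ^ (2 * ν)) ^ p := by
          rw [mul_rpow (by positivity) (by positivity), ← rpow_mul hy0.le, rpow_add hy0]
          ring
      _ ≤ y ^ (n - 1) * ‖besselRadial ν κ y‖ ^ p := by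
          rw [norm_of_nonneg (besselRadial_nonneg ν hκ.le hy0.le)]
          gcongr
          exact hlow y ⟨hy0, hy1.le⟩
  rw [intervalIntegral.integrableOn_Ioo_rpow_iff (inv_pos.2 hκ)] at hint
  linarith

lemma exists_pos_abs_le_sub_mul_lt {ν p n : ℝ} (hp : 0 < p) (hn : 0 < n)
    (h : 0 < n + 2 * ν * p) : ∃ μ, 0 < μ ∧ |ν| ≤ μ ∧ (μ - ν) * p < n := by
  refine ⟨max ν (n / (2 * p)), lt_max_of_lt_right (by positivity),
    abs_le.2 ⟨?_, le_max_left _ _⟩, ?_⟩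
  · have : -(n / (2 * p)) ≤ ν := by
      rw [neg_le, le_div_iff₀ (by positivity)]
      linarith
    linarith [le_max_right ν (n / (2 * p))]
  · rcases max_cases ν (n / (2 * p)) with ⟨hmax, _⟩ | ⟨hmax, _⟩ <;> rw [hmax]
    · simpa using hn
    · field_simp
      linarith

lemma integrableOn_rpow_mul_norm_besselRadial_rpow {ν κ p n : ℝ} (hκ : 0 < κ) (hp : 0 < p)
    (hn : 0 < n) (h : 0 < n + 2 * ν * p) :
    IntegrableOn (fun y => y ^ (n - 1) * ‖besselRadial ν κ y‖ ^ p) (Ioi 0) := by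
  obtain ⟨μ, hμ, hνμ, hμp⟩ := exists_pos_abs_le_sub_mul_lt hp hn h
  have := Gamma_pos_of_pos hμ
  set C := (Gamma μ * 4 ^ μ * κ ^ (ν - μ)) ^ p
  have hint := integrableOn_rpow_mul_exp_neg_mul_rpow (s := n - 1 + (ν - μ) * p) (p := 1)
    (b := p * κ / 2) (by nlinarith) one_pos (by positivity)
  refine (hint.const_mul C).mono'
    (measurable_rpow_mul_norm_besselRadial_rpow ν κ p n).aestronglyMeasurable ?_
  filter_upwards [ae_restrict_mem measurableSet_Ioi] with y (hy : 0 < y)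
  rw [norm_of_nonneg (by positivity), norm_of_nonneg (besselRadial_nonneg ν hκ.le hy.le)]
  calc y ^ (n - 1) * besselRadial ν κ y ^ p
      ≤ y ^ (n - 1) * (Gamma μ * 4 ^ μ * κ ^ (ν - μ) * y ^ (ν - μ) * exp (-(κ / 2) * y)) ^ p := by
        gcongr
        · exact besselRadial_nonneg ν hκ.le hy.le
        · exact besselRadial_le hκ hy hμ hνμ
    _ = C * (y ^ (n - 1 + (ν - μ) * p) * exp (-(p * κ / 2) * y ^ (1 : ℝ))) := by
        rw [mul_rpow (by positivity) (exp_pos _).le, mul_rpow (by positivity) (by positivity),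
          ← rpow_mul hy.le, ← exp_mul, rpow_one, rpow_add hy]
        simp only [C]
        ring_nf

theorem integrableOn_rpow_mul_norm_besselRadial_rpow_iff {ν κ p n : ℝ} (hκ : 0 < κ)
    (hp : 0 < p) (hn : 0 < n) :
    IntegrableOn (fun y => y ^ (n - 1) * ‖besselRadial ν κ y‖ ^ p) (Ioi 0) ↔
      0 < n + 2 * ν * p :=
  ⟨pos_of_integrableOn_rpow_mul_norm_besselRadial_rpow hκ hp hn,
    integrableOn_rpow_mul_norm_besselRadial_rpow hκ hp hn⟩

lemma greenG_eq_mul_besselRadial (d : ℕ) (α κ : ℝ) (s t : EuclideanSpace ℝ (Fin d)) :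
    greenG d α κ s t = 2 ^ (1 - (α - d) / 2) /
      ((4 * π) ^ ((d : ℝ) / 2) * Gamma (α / 2) * κ ^ (α - d)) *
        besselRadial ((α - d) / 2) κ ‖s - t‖ :=
  mul_assoc _ _ _

/-- `G_α(s, ·) ∈ L_p(ℝ^d)` if and only if `α > (p−1)d/p`. -/
theorem greenG_memLp_iff (d : ℕ) (hd : 0 < d) (α κ p : ℝ) (hα : 0 < α) (hκ : 0 < κ)
    (hp : 1 ≤ p) (s : EuclideanSpace ℝ (Fin d)) :
    MemLp (fun t => greenG d α κ s t) (ENNReal.ofReal p) volume ↔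
      (p - 1) * d / p < α := by
  have hp0 : 0 < p := by linarith
  have : Nontrivial (EuclideanSpace ℝ (Fin d)) :=
    Module.nontrivial_of_finrank_pos (R := ℝ) (by simpa using hd)
  have hA :
      2 ^ (1 - (α - d) / 2) / ((4 * π) ^ ((d : ℝ) / 2) * Gamma (α / 2) * κ ^ (α - d)) ≠ 0 := by
    have := Gamma_pos_of_pos (half_pos hα)
    positivity
  simp_rw [greenG_eq_mul_besselRadial]
  rw [memLp_const_mul_iff hA, memLp_comp_norm_sub_iff volume
    (measurable_besselRadial _ _).stronglyMeasurable (by simpa using hp0) ENNReal.ofReal_ne_top,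
    finrank_euclideanSpace_fin, ENNReal.toReal_ofReal hp0.le,
    integrableOn_rpow_mul_norm_besselRadial_rpow_iff hκ hp0 (by positivity), div_lt_iff₀ hp0]
  constructor <;> intro h <;> linarith
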